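/- Fix an integer b ≥ 3. With NCD(b,X) = (X+1)·b^(X+1) − (b^(X+1) − 1)/(b−1) − X − 1 and L(b,X) = NCD(b,X) − 2·NCD(b,X−1) − 3X − 2, the ratio L(b,X)/NCD(b,X) tends to (b−2)/b as X → ∞. -/

import Mathlib

/-! With `D X = (X + 1) b^(X + 1)`, `NCD b X = D X + O(b^X)`, and since
`D X - 2 D (X - 1) = (b - 2)/b · D X + 2 b^X`, also `hwmLen b X = (b - 2)/b · D X + O(b^X)`.
As `b^X = o(D X)`, the ratio tends to `(b - 2)/b`. -/

/-- Number of correct digits of the `10_b^X` High-Water-Mark convergent, as a real number. -/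
noncomputable def NCD (b : ℤ) (X : ℕ) : ℝ :=
  (X + 1) * (b : ℝ) ^ (X + 1) - ((b : ℝ) ^ (X + 1) - 1) / ((b : ℝ) - 1) - X - 1

/-- Predicted length of the High-Water-Mark coefficient following the `10_b^X` convergent. -/
noncomputable def hwmLen (b : ℤ) (X : ℕ) : ℝ := NCD b X - 2 * NCD b (X - 1) - 3 * X - 2

open Filter Asymptotics Topology

section RatioLimit

variable {α 𝕜 : Type*} [NormedField 𝕜] {l : Filter α} {u v D : α → 𝕜} {a : 𝕜}

theorem tendsto_div_of_isLittleO_sub_mul (hD : ∀ᶠ x in l, D x ≠ 0)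
    (hu : (fun x => u x - a * D x) =o[l] D) : Tendsto (fun x => u x / D x) l (𝓝 a) := by
  have h := hu.tendsto_div_nhds_zero.add_const a
  rw [zero_add] at h
  refine h.congr' ?_
  filter_upwards [hD] with x hx
  field_simp
  ring

theorem tendsto_div_of_isLittleO_sub (hD : ∀ᶠ x in l, D x ≠ 0)
    (hu : (fun x => u x - a * D x) =o[l] D) (hv : (fun x => v x - D x) =o[l] D) :
    Tendsto (fun x => u x / v x) l (𝓝 a) := by
  have hv' : Tendsto (fun x => v x / D x) l (𝓝 1) :=
    tendsto_div_of_isLittleO_sub_mul hD (by simpa only [one_mul] using hv)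
  have h := (tendsto_div_of_isLittleO_sub_mul hD hu).div hv' one_ne_zero
  rw [div_one] at h
  refine h.congr' ?_
  filter_upwards [hD] with x hx
  exact div_div_div_cancel_right₀ hx _ _

end RatioLimit

section PowGrowth

variable {b : ℝ}

theorem isBigO_one_pow (hb : 1 ≤ b) : (fun _ : ℕ => (1 : ℝ)) =O[atTop] (fun X => b ^ X) :=
  isBigO_of_le _ fun X => by
    rw [norm_one, Real.norm_of_nonneg (by positivity)]
    exact one_le_pow₀ hb

theorem isBigO_pow_pred_pow (hb : 1 ≤ b) : (fun X : ℕ => b ^ (X - 1)) =O[atTop] (fun X => b ^ X) :=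
  isBigO_of_le _ fun X => by
    rw [Real.norm_of_nonneg (by positivity), Real.norm_of_nonneg (by positivity)]
    exact pow_le_pow_right₀ hb (Nat.sub_le X 1)

theorem isLittleO_pow_natCast_add_one_mul_pow_succ (hb : 0 < b) :
    (fun X : ℕ => b ^ X) =o[atTop] (fun X => ((X : ℝ) + 1) * b ^ (X + 1)) := by
  have hpow : (fun X : ℕ => b ^ X) =O[atTop] (fun X => b ^ (X + 1)) :=
    (isBigO_const_mul_self b⁻¹ _ _).congr_left fun X => by
      rw [pow_succ, mul_comm, mul_inv_cancel_right₀ hb.ne']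
  have hone : (fun _ : ℕ => (1 : ℝ)) =o[atTop] (fun X : ℕ => (X : ℝ) + 1) :=
    (isLittleO_one_left_iff ℝ).2 <| tendsto_norm_atTop_atTop.comp <|
      tendsto_atTop_add_const_right _ 1 tendsto_natCast_atTop_atTop
  simpa only [mul_one, mul_comm (b ^ (_ + 1))] using hpow.mul_isLittleO hone

end PowGrowth

theorem NCD_sub_isBigO {b : ℤ} (hb : 1 < b) :
    (fun X : ℕ => NCD b X - ((X : ℝ) + 1) * (b : ℝ) ^ (X + 1)) =O[atTop] (fun X => (b : ℝ) ^ X) := by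
  have hb' : (1 : ℝ) < b := by exact_mod_cast hb
  refine (((isBigO_const_mul_self (-((b : ℝ) / (b - 1))) _ _).add
    ((isBigO_one_pow hb'.le).const_mul_left (1 / ((b : ℝ) - 1) - 1))).sub
    (isLittleO_coe_const_pow_of_one_lt hb').isBigO).congr_left fun X => ?_
  have hb1 : (b : ℝ) - 1 ≠ 0 := by linarith
  simp only [NCD]
  field_simp
  ring

theorem hwmLen_sub_isBigO {b : ℤ} (hb : 1 < b) :
    (fun X : ℕ => hwmLen b X - ((b : ℝ) - 2) / b * (((X : ℝ) + 1) * (b : ℝ) ^ (X + 1)))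
      =O[atTop] (fun X => (b : ℝ) ^ X) := by
  have hb' : (1 : ℝ) < b := by exact_mod_cast hb
  have hpred := ((NCD_sub_isBigO hb).comp_tendsto (tendsto_sub_atTop_nat 1)).trans
    (isBigO_pow_pred_pow hb'.le)
  have hlin := ((isLittleO_coe_const_pow_of_one_lt hb').isBigO.const_mul_left (3 : ℝ)).add
    ((isBigO_one_pow hb'.le).const_mul_left 2)
  refine ((((NCD_sub_isBigO hb).sub (hpred.const_mul_left 2)).add
    ((isBigO_refl _ _).const_mul_left 2)).sub hlin).congr' ?_ EventuallyEq.rfl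
  filter_upwards [eventually_ge_atTop 1] with X hX
  obtain ⟨Y, rfl⟩ : ∃ Y, X = Y + 1 := ⟨X - 1, by omega⟩
  have hb0 : (b : ℝ) ≠ 0 := by linarith
  simp only [Function.comp, hwmLen, Nat.add_sub_cancel]
  push_cast
  field_simp
  ring

/-- For fixed `b ≥ 3`, `L(b,X)/NCD(b,X) → (b−2)/b` as `X → ∞`. -/
theorem hwm_length_ratio_tendsto (b : ℤ) (hb : 3 ≤ b) :
    Filter.Tendsto (fun X : ℕ => hwmLen b X / NCD b X) Filter.atTop
      (nhds (((b : ℝ) - 2) / (b : ℝ))) := by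
  have hb1 : 1 < b := by omega
  have hpos : (0 : ℝ) < b := by exact_mod_cast (by omega : 0 < b)
  exact tendsto_div_of_isLittleO_sub (Eventually.of_forall fun X => by positivity)
    ((hwmLen_sub_isBigO hb1).trans_isLittleO (isLittleO_pow_natCast_add_one_mul_pow_succ hpos))
    ((NCD_sub_isBigO hb1).trans_isLittleO (isLittleO_pow_natCast_add_one_mul_pow_succ hpos))
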